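/- arXiv:1911.10590 — 3 statements merged into one kernel-verified Lean document; each statement's English description precedes it below -/
import Mathlib

section
/- Let β with 1 < β < (1+√5)/2 be a reciprocal algebraic integer. Then the digit sequence (t_i)_{i≥1} of the Rényi β-expansion of 1 has infinitely many nonzero terms; equivalently, the Parry Upper function f_β is not a polynomial (β is not a simple Parry number). -/
/-!
If the digits of the Rényi expansion of `1` vanish from some index `M ≥ 1` on, then
`T_β^M(1) = 0`, since otherwise `T_β^{M+k}(1) = β^k T_β^M(1)` would leave `[0, 1)`. Unwinding the
recurrence `T_β^{k+1}(1) = β T_β^k(1) - t_{k+1}` then shows that `β` is a root of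
`Q = X^M - Σ_{i<M} t_{M-i} X^i`. Reciprocity of the minimal polynomial makes `β⁻¹` a root of `Q`
as well, i.e. `1 = Σ_{j=1}^{M} t_j β^j`; but the right-hand side is at least `t_1 β ≥ β > 1`.
-/

/-- The β-transformation `T_β : [0,1] → [0,1]`, `T_β(x) = βx − ⌊βx⌋`. -/
noncomputable def betaT (β : ℝ) (x : ℝ) : ℝ := Int.fract (β * x)

/-- The digits of the Rényi β-expansion of `1`: for `i ≥ 1`,
`t_i = ⌊β·T_β^{i−1}(1)⌋` (so `t_1 = ⌊β⌋`). -/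
noncomputable def renyiDigit (β : ℝ) (i : ℕ) : ℤ := ⌊β * (betaT β)^[i - 1] 1⌋

open Polynomial Finset

theorem aeval_inv_eq_zero_of_reverse_minpoly_eq {K L : Type*} [Field K] [Field L] [Algebra K L]
    {x : L} (hx : x ≠ 0) (hrec : (minpoly K x).reverse = minpoly K x) {p : K[X]}
    (hp : aeval x p = 0) : aeval x⁻¹ p = 0 := by
  have : Invertible x := invertibleOfNonzero hx
  have hmin : aeval x⁻¹ (minpoly K x) = 0 := by
    rw [← hrec, ← invOf_eq_inv, aeval_def, eval₂_reverse_eq_zero_iff, ← aeval_def, minpoly.aeval]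
  obtain ⟨q, rfl⟩ := minpoly.dvd K x hp
  rw [map_mul, hmin, zero_mul]

section BetaExpansion

variable {β : ℝ}

theorem betaT_iterate_nonneg (k : ℕ) : 0 ≤ (betaT β)^[k] 1 := by
  cases k with
  | zero => exact zero_le_one
  | succ k => rw [Function.iterate_succ_apply']; exact Int.fract_nonneg _

theorem betaT_iterate_lt_one {k : ℕ} (hk : 1 ≤ k) (x : ℝ) : (betaT β)^[k] x < 1 := by
  obtain ⟨k, rfl⟩ := Nat.exists_eq_add_of_le' hk
  rw [Function.iterate_succ_apply']
  exact Int.fract_lt_one _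

theorem betaT_iterate_succ_one (k : ℕ) :
    (betaT β)^[k + 1] 1 = β * (betaT β)^[k] 1 - renyiDigit β (k + 1) := by
  rw [Function.iterate_succ_apply', betaT, renyiDigit, Nat.add_sub_cancel, Int.fract]

theorem renyiDigit_nonneg (hβ : 0 ≤ β) (i : ℕ) : 0 ≤ renyiDigit β i :=
  Int.floor_nonneg.2 (mul_nonneg hβ (betaT_iterate_nonneg _))

theorem one_le_renyiDigit_one (hβ : 1 ≤ β) : 1 ≤ renyiDigit β 1 := by
  simpa [renyiDigit, Int.le_floor] using hβ

theorem betaT_iterate_add_eq_pow_mul {M : ℕ} (h : ∀ k, M ≤ k → renyiDigit β (k + 1) = 0)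
    (k : ℕ) : (betaT β)^[M + k] 1 = β ^ k * (betaT β)^[M] 1 := by
  induction k with
  | zero => simp
  | succ k ih =>
    rw [← add_assoc, betaT_iterate_succ_one, h _ (Nat.le_add_right M k), ih]
    push_cast
    ring

theorem betaT_iterate_eq_zero_of_renyiDigit_eq_zero (hβ : 1 < β) {M : ℕ} (hM : 1 ≤ M)
    (h : ∀ k, M ≤ k → renyiDigit β (k + 1) = 0) : (betaT β)^[M] 1 = 0 := by
  by_contra hne
  have hpos : 0 < (betaT β)^[M] 1 := (betaT_iterate_nonneg M).lt_of_ne' hne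
  obtain ⟨k, hk⟩ := pow_unbounded_of_one_lt ((betaT β)^[M] 1)⁻¹ hβ
  have hgt : 1 < β ^ k * (betaT β)^[M] 1 := by
    simpa [inv_mul_cancel₀ hpos.ne'] using mul_lt_mul_of_pos_right hk hpos
  have hlt : β ^ k * (betaT β)^[M] 1 < 1 := by
    rw [← betaT_iterate_add_eq_pow_mul h]
    exact betaT_iterate_lt_one (hM.trans (Nat.le_add_right M k)) 1
  exact hgt.not_gt hlt

noncomputable def renyiPoly (β : ℝ) (M : ℕ) : ℚ[X] :=
  X ^ M - ∑ i ∈ range M, C (renyiDigit β (M - i) : ℚ) * X ^ i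

theorem aeval_renyiPoly (x : ℝ) (M : ℕ) :
    aeval x (renyiPoly β M) = x ^ M - ∑ i ∈ range M, (renyiDigit β (M - i) : ℝ) * x ^ i := by
  simp [renyiPoly]

theorem aeval_renyiPoly_self (M : ℕ) : aeval β (renyiPoly β M) = (betaT β)^[M] 1 := by
  induction M with
  | zero => simp [renyiPoly]
  | succ n ih =>
    rw [aeval_renyiPoly] at ih ⊢
    rw [betaT_iterate_succ_one, ← ih, sum_range_succ']
    simp only [Nat.succ_sub_succ, Nat.sub_zero, pow_succ, ← mul_assoc, ← sum_mul]
    ring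

theorem pow_mul_aeval_inv_renyiPoly (hβ : β ≠ 0) (M : ℕ) :
    β ^ M * aeval β⁻¹ (renyiPoly β M) =
      1 - ∑ j ∈ range M, (renyiDigit β (j + 1) : ℝ) * β ^ (j + 1) := by
  rw [aeval_renyiPoly, mul_sub, inv_pow, mul_inv_cancel₀ (pow_ne_zero M hβ), mul_sum,
    ← sum_range_reflect]
  congr 1
  refine sum_congr rfl fun j hj => ?_
  have hjM := mem_range.1 hj
  have hpow : β ^ M * (β ^ (M - 1 - j))⁻¹ = β ^ (j + 1) := by
    rw [← mul_inv_cancel_right₀ (pow_ne_zero (M - 1 - j) hβ) (β ^ (j + 1)), ← pow_add]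
    congr 2
    omega
  rw [show M - (M - 1 - j) = j + 1 by omega, inv_pow, ← hpow]
  ring

theorem aeval_inv_renyiPoly_ne_zero (hβ : 1 < β) {M : ℕ} (hM : 1 ≤ M) :
    aeval β⁻¹ (renyiPoly β M) ≠ 0 := by
  have hβ0 : 0 < β := zero_lt_one.trans hβ
  intro hzero
  have hsum : 1 = ∑ j ∈ range M, (renyiDigit β (j + 1) : ℝ) * β ^ (j + 1) := by
    have h := pow_mul_aeval_inv_renyiPoly hβ0.ne' M
    rw [hzero, mul_zero] at h
    linarith
  obtain ⟨n, rfl⟩ := Nat.exists_eq_add_of_le' hM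
  have hrest : 0 ≤ ∑ j ∈ range n, (renyiDigit β (j + 1 + 1) : ℝ) * β ^ (j + 1 + 1) :=
    sum_nonneg fun j _ => mul_nonneg (by exact_mod_cast renyiDigit_nonneg hβ0.le _) (by positivity)
  have hfirst : β ≤ (renyiDigit β 1 : ℝ) * β :=
    le_mul_of_one_le_left hβ0.le (by exact_mod_cast one_le_renyiDigit_one hβ.le)
  rw [sum_range_succ', zero_add, pow_one] at hsum
  linarith

end BetaExpansion

theorem reciprocal_renyi_expansion_infinite_general
    (β : ℝ) (hβ1 : 1 < β)
    (hrec : (minpoly ℚ β).reverse = minpoly ℚ β) :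
    ∀ N : ℕ, ∃ i : ℕ, N ≤ i ∧ 1 ≤ i ∧ renyiDigit β i ≠ 0 := by
  intro N
  by_contra! h
  have hM : 1 ≤ max N 1 := le_max_right N 1
  have hzero : ∀ k, max N 1 ≤ k → renyiDigit β (k + 1) = 0 :=
    fun k hk => h (k + 1) (by omega) (by omega)
  have hroot : aeval β (renyiPoly β (max N 1)) = 0 := by
    rw [aeval_renyiPoly_self, betaT_iterate_eq_zero_of_renyiDigit_eq_zero hβ1 hM hzero]
  exact aeval_inv_renyiPoly_ne_zero hβ1 hM
    (aeval_inv_eq_zero_of_reverse_minpoly_eq (by positivity) hrec hroot)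

/-- let `β ∈ (1, (1+√5)/2)` be a reciprocal algebraic integer. Then the
digit sequence `(t_i)_{i ≥ 1}` of the Rényi β-expansion of `1` has infinitely many
nonzero terms; equivalently the Parry Upper function `f_β` is not a polynomial
(`β` is not a simple Parry number). -/
theorem reciprocal_renyi_expansion_infinite
    (β : ℝ) (hβ1 : 1 < β) (hβ2 : β < (1 + Real.sqrt 5) / 2)
    (hint : IsIntegral ℤ β)
    (hrec : (minpoly ℚ β).reverse = minpoly ℚ β) :
    ∀ N : ℕ, ∃ i : ℕ, N ≤ i ∧ 1 ≤ i ∧ renyiDigit β i ≠ 0 :=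
  reciprocal_renyi_expansion_infinite_general β hβ1 hrec
end

section
/- Let β with 1 < β < (1+√5)/2. (i) If β is not a simple Parry number, then for every sequence γ_k ∈ (1, (1+√5)/2) with γ_k → β, the functions f_{γ_k} converge to f_β uniformly on every compact subset of the open unit disk. (ii) If β is a simple Parry number and N is the smallest positive integer with T_β^N(1) = 0, then f_γ → f_β uniformly on compact subsets of |z| < 1 as γ → β from the right, while f_γ(z) → f_β(z)/(1 − z^N) uniformly on compact subsets of |z| < 1 as γ → β from the left. -/
/-- Coefficients of the Parry Upper function `f_β(z) = −1 + Σ_{i≥1} t_i z^i`. -/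
noncomputable def puCoeff (β : ℝ) : ℕ → ℤ
  | 0 => -1
  | (i + 1) => ⌊β * (betaT β)^[i] 1⌋

/-- The Parry Upper function `f_β(z) = −1 + Σ_{i≥1} t_i z^i` on the open unit disk. -/
noncomputable def parryUpper (β : ℝ) (z : ℂ) : ℂ := ∑' i : ℕ, (puCoeff β i : ℂ) * z ^ i

open Filter Topology Set

section Orbit

variable (γ : ℝ)

theorem betaT_iterate_nonneg_s11 : ∀ i : ℕ, 0 ≤ (betaT γ)^[i] 1
  | 0 => zero_le_one
  | i + 1 => by rw [Function.iterate_succ_apply']; exact Int.fract_nonneg _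

theorem betaT_iterate_le_one : ∀ i : ℕ, (betaT γ)^[i] 1 ≤ 1
  | 0 => le_rfl
  | i + 1 => by rw [Function.iterate_succ_apply']; exact (Int.fract_lt_one _).le

theorem betaT_iterate_succ_lt_one (i : ℕ) : (betaT γ)^[i + 1] 1 < 1 := by
  rw [Function.iterate_succ_apply']; exact Int.fract_lt_one _

theorem mul_betaT_iterate (i : ℕ) :
    γ * (betaT γ)^[i] 1 = puCoeff γ (i + 1) + (betaT γ)^[i + 1] 1 := by
  rw [Function.iterate_succ_apply', puCoeff, betaT, Int.floor_add_fract]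

theorem norm_puCoeff_le : ∀ i : ℕ, ‖(puCoeff γ i : ℂ)‖ ≤ 1 + |γ|
  | 0 => by simp [puCoeff]
  | i + 1 => by
    have hx : |γ * (betaT γ)^[i] 1| ≤ |γ| := by
      rw [abs_mul, abs_of_nonneg (betaT_iterate_nonneg_s11 γ i)]
      exact mul_le_of_le_one_right (abs_nonneg γ) (betaT_iterate_le_one γ i)
    have h₁ := Int.floor_le (γ * (betaT γ)^[i] 1)
    have h₂ := Int.lt_floor_add_one (γ * (betaT γ)^[i] 1)
    rw [Complex.norm_intCast, puCoeff]
    rw [abs_le] at hx ⊢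
    constructor <;> linarith

end Orbit

section Floor

variable {ι : Type*} {l : Filter ι} {u : ι → ℝ} {b : ℤ} {y : ℝ}

theorem eventually_floor_eq_and_tendsto_fract_nhdsGE (hy₀ : 0 ≤ y) (hy₁ : y < 1)
    (hu : Tendsto u l (𝓝[≥] (b + y))) :
    (∀ᶠ k in l, ⌊u k⌋ = b) ∧ Tendsto (fun k => Int.fract (u k)) l (𝓝[≥] y) := by
  have hfloor : ∀ᶠ k in l, ⌊u k⌋ = b := by
    filter_upwards [hu (Ico_mem_nhdsGE (by linarith : (b : ℝ) + y < b + 1))] with k hk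
    exact Int.floor_eq_iff.2 ⟨by linarith [hk.1], hk.2⟩
  refine ⟨hfloor, ?_⟩
  rw [tendsto_nhdsWithin_iff] at hu ⊢
  refine ⟨?_, ?_⟩
  · refine (by simpa using hu.1.sub_const (b : ℝ) : Tendsto (fun k => u k - b) l (𝓝 y)).congr' ?_
    filter_upwards [hfloor] with k hk
    rw [Int.fract, hk]
  · filter_upwards [hfloor, hu.2] with k hk hk'
    rw [Int.fract, hk]
    exact le_sub_iff_add_le'.2 (mem_Ici.1 hk')

theorem eventually_floor_eq_and_tendsto_fract_nhdsLT (hy₀ : 0 < y) (hy₁ : y ≤ 1)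
    (hu : Tendsto u l (𝓝[<] (b + y))) :
    (∀ᶠ k in l, ⌊u k⌋ = b) ∧ Tendsto (fun k => Int.fract (u k)) l (𝓝[<] y) := by
  have hfloor : ∀ᶠ k in l, ⌊u k⌋ = b := by
    filter_upwards [hu (Ico_mem_nhdsLT (by linarith : (b : ℝ) < b + y))] with k hk
    exact Int.floor_eq_iff.2 ⟨hk.1, by linarith [hk.2]⟩
  refine ⟨hfloor, ?_⟩
  rw [tendsto_nhdsWithin_iff] at hu ⊢
  refine ⟨?_, ?_⟩
  · refine (by simpa using hu.1.sub_const (b : ℝ) : Tendsto (fun k => u k - b) l (𝓝 y)).congr' ?_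
    filter_upwards [hfloor] with k hk
    rw [Int.fract, hk]
  · filter_upwards [hfloor, hu.2] with k hk hk'
    rw [Int.fract, hk]
    exact sub_lt_iff_lt_add'.2 (mem_Iio.1 hk')

end Floor

theorem tendsto_mul_nhdsGE {β y : ℝ} {x : ℝ → ℝ} (hβ : 0 ≤ β) (hy : 0 ≤ y)
    (hx : Tendsto x (𝓝[≥] β) (𝓝[≥] y)) :
    Tendsto (fun γ => γ * x γ) (𝓝[≥] β) (𝓝[≥] (β * y)) := by
  rw [tendsto_nhdsWithin_iff] at hx ⊢
  refine ⟨(tendsto_nhdsWithin_of_tendsto_nhds tendsto_id).mul hx.1, ?_⟩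
  filter_upwards [self_mem_nhdsWithin, hx.2] with γ (hγ : β ≤ γ) (hxγ : y ≤ x γ)
  exact mul_le_mul hγ hxγ hy (hβ.trans hγ)

theorem tendsto_mul_nhdsLT {β y : ℝ} {x : ℝ → ℝ} (hβ : 0 < β) (hy : 0 < y)
    (hx : Tendsto x (𝓝[<] β) (𝓝[≤] y)) :
    Tendsto (fun γ => γ * x γ) (𝓝[<] β) (𝓝[<] (β * y)) := by
  rw [tendsto_nhdsWithin_iff] at hx ⊢
  refine ⟨(tendsto_nhdsWithin_of_tendsto_nhds tendsto_id).mul hx.1, ?_⟩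
  filter_upwards [Ioo_mem_nhdsLT hβ, hx.2] with γ hγ (hxγ : x γ ≤ y)
  calc γ * x γ ≤ γ * y := mul_le_mul_of_nonneg_left hxγ hγ.1.le
    _ < β * y := mul_lt_mul_of_pos_right hγ.2 hy

theorem tendsto_betaT_iterate_nhdsGE {β : ℝ} (hβ : 0 ≤ β) :
    ∀ i : ℕ, Tendsto (fun γ => (betaT γ)^[i] 1) (𝓝[≥] β) (𝓝[≥] ((betaT β)^[i] 1))
  | 0 => tendsto_nhdsWithin_iff.2 ⟨tendsto_const_nhds, .of_forall fun _ => self_mem_Ici⟩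
  | i + 1 => by
    have hu := tendsto_mul_nhdsGE hβ (betaT_iterate_nonneg_s11 β i) (tendsto_betaT_iterate_nhdsGE hβ i)
    rw [mul_betaT_iterate] at hu
    refine (eventually_floor_eq_and_tendsto_fract_nhdsGE (betaT_iterate_nonneg_s11 β _)
      (betaT_iterate_succ_lt_one β i) hu).2.congr fun γ => ?_
    exact (Function.iterate_succ_apply' (betaT γ) i 1).symm

theorem eventually_puCoeff_eq_nhdsGE {β : ℝ} (hβ : 0 ≤ β) :
    ∀ i : ℕ, ∀ᶠ γ in 𝓝[≥] β, puCoeff γ i = puCoeff β i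
  | 0 => .of_forall fun _ => rfl
  | i + 1 => by
    have hu := tendsto_mul_nhdsGE hβ (betaT_iterate_nonneg_s11 β i) (tendsto_betaT_iterate_nhdsGE hβ i)
    rw [mul_betaT_iterate] at hu
    exact (eventually_floor_eq_and_tendsto_fract_nhdsGE (betaT_iterate_nonneg_s11 β _)
      (betaT_iterate_succ_lt_one β i) hu).1

theorem tendsto_betaT_iterate_nhdsLT {β : ℝ} {b : ℕ → ℤ} {y : ℕ → ℝ} (hβ : 0 < β)
    (hy₀ : y 0 = 1) (hrec : ∀ i, β * y i = b (i + 1) + y (i + 1)) (hpos : ∀ i, 0 < y i)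
    (hle : ∀ i, y i ≤ 1) :
    ∀ i : ℕ, Tendsto (fun γ => (betaT γ)^[i] 1) (𝓝[<] β) (𝓝[≤] (y i))
  | 0 => hy₀ ▸ tendsto_nhdsWithin_iff.2 ⟨tendsto_const_nhds, .of_forall fun _ => self_mem_Iic⟩
  | i + 1 => by
    have hu := tendsto_mul_nhdsLT hβ (hpos i) (tendsto_betaT_iterate_nhdsLT hβ hy₀ hrec hpos hle i)
    rw [hrec] at hu
    refine (tendsto_nhdsWithin_mono_right Iio_subset_Iic_self
      (eventually_floor_eq_and_tendsto_fract_nhdsLT (hpos _) (hle _) hu).2).congr fun γ => ?_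
    exact (Function.iterate_succ_apply' (betaT γ) i 1).symm

theorem eventually_puCoeff_eq_nhdsLT {β : ℝ} {b : ℕ → ℤ} {y : ℕ → ℝ} (hβ : 0 < β)
    (hb₀ : b 0 = -1) (hy₀ : y 0 = 1) (hrec : ∀ i, β * y i = b (i + 1) + y (i + 1))
    (hpos : ∀ i, 0 < y i) (hle : ∀ i, y i ≤ 1) :
    ∀ i : ℕ, ∀ᶠ γ in 𝓝[<] β, puCoeff γ i = b i
  | 0 => .of_forall fun _ => hb₀.symm
  | i + 1 => by
    have hu := tendsto_mul_nhdsLT hβ (hpos i) (tendsto_betaT_iterate_nhdsLT hβ hy₀ hrec hpos hle i)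
    rw [hrec] at hu
    exact (eventually_floor_eq_and_tendsto_fract_nhdsLT (hpos _) (hle _) hu).1

theorem eventually_puCoeff_eq_nhds {β : ℝ} (hβ : 0 < β) (hβ' : ∀ i, (betaT β)^[i + 1] 1 ≠ 0)
    (i : ℕ) : ∀ᶠ γ in 𝓝 β, puCoeff γ i = puCoeff β i := by
  have hpos : ∀ i, 0 < (betaT β)^[i] 1
    | 0 => one_pos
    | i + 1 => (betaT_iterate_nonneg_s11 β _).lt_of_ne' (hβ' i)
  rw [← nhdsLT_sup_nhdsGE, eventually_sup]
  exact ⟨eventually_puCoeff_eq_nhdsLT (b := puCoeff β) (y := fun i => (betaT β)^[i] 1) hβ rfl rfl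
    (mul_betaT_iterate β) hpos (betaT_iterate_le_one β) i, eventually_puCoeff_eq_nhdsGE hβ.le i⟩

theorem summable_mul_pow_of_norm_le {c : ℕ → ℂ} {B : ℝ} (hc : ∀ i, ‖c i‖ ≤ B) {z : ℂ}
    (hz : ‖z‖ < 1) : Summable fun i => c i * z ^ i :=
  .of_norm_bounded ((summable_geometric_of_lt_one (norm_nonneg z) hz).mul_left B) fun i => by
    rw [norm_mul, norm_pow]
    exact mul_le_mul_of_nonneg_right (hc i) (by positivity)

theorem tendstoUniformlyOn_tsum_mul_pow {ι : Type*} {l : Filter ι} [l.NeBot] {a : ι → ℕ → ℂ}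
    {c : ℕ → ℂ} {B : ℝ} (ha : ∀ᶠ k in l, ∀ i, ‖a k i‖ ≤ B) (hac : ∀ i, ∀ᶠ k in l, a k i = c i)
    {K : Set ℂ} (hK : IsCompact K) (hK₁ : K ⊆ {z : ℂ | ‖z‖ < 1}) :
    TendstoUniformlyOn (fun k z => ∑' i, a k i * z ^ i) (fun z => ∑' i, c i * z ^ i) l K := by
  have hc : ∀ i, ‖c i‖ ≤ B := fun i => by
    obtain ⟨k, hk, hak⟩ := ((hac i).and ha).exists
    exact hk ▸ hak i
  obtain ⟨r, ⟨hr₀, hr₁⟩, hKr⟩ := exists_pos_lt_subset_ball one_pos hK.isClosed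
    (by simpa [subset_def] using hK₁ : K ⊆ Metric.ball (0 : ℂ) 1)
  have hgeom := (summable_geometric_of_lt_one hr₀.le hr₁).mul_left (2 * B)
  have hdiff : ∀ᶠ k in l, ∀ i, ‖a k i - c i‖ * r ^ i ≤ 2 * B * r ^ i :=
    ha.mono fun k hk i => mul_le_mul_of_nonneg_right
      ((norm_sub_le _ _).trans (by linarith [hk i, hc i])) (by positivity)
  have htail : Tendsto (fun k => ∑' i, ‖a k i - c i‖ * r ^ i) l (𝓝 0) := by
    simpa using tendsto_tsum_of_dominated_convergence (g := fun _ => (0 : ℝ)) hgeom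
      (fun i => tendsto_const_nhds.congr' <| (hac i).mono fun k hk => by simp [hk])
      (hdiff.mono fun k hk i => by
        rw [Real.norm_of_nonneg (by positivity)]; exact hk i)
  rw [Metric.tendstoUniformlyOn_iff]
  intro ε hε
  filter_upwards [ha, hdiff, htail.eventually (gt_mem_nhds hε)] with k hk hkd hkε z hz
  have hzr : ‖z‖ ≤ r := (by simpa using hKr hz : ‖z‖ < r).le
  calc dist (∑' i, c i * z ^ i) (∑' i, a k i * z ^ i)
      = ‖∑' i, (a k i - c i) * z ^ i‖ := by
        rw [dist_comm, dist_eq_norm, ← (summable_mul_pow_of_norm_le hk (hK₁ hz)).tsum_sub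
          (summable_mul_pow_of_norm_le hc (hK₁ hz))]
        simp_rw [sub_mul]
    _ ≤ ∑' i, ‖a k i - c i‖ * r ^ i :=
        tsum_of_norm_bounded (hgeom.of_nonneg_of_le (fun i => by positivity) hkd).hasSum fun i => by
          rw [norm_mul, norm_pow]
          exact mul_le_mul_of_nonneg_left (pow_le_pow_left₀ (norm_nonneg z) hzr i) (norm_nonneg _)
    _ < ε := hkε

theorem TendstoUniformlyOn.comp_tendsto {ι κ α β : Type*} [UniformSpace β] {F : ι → α → β}
    {f : α → β} {p : Filter ι} {s : Set α} (h : TendstoUniformlyOn F f p s) {q : Filter κ}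
    {g : κ → ι} (hg : Tendsto g q p) : TendstoUniformlyOn (fun k => F (g k)) f q s :=
  fun u hu => hg.eventually (h u hu)

theorem tendstoUniformlyOn_parryUpper {β : ℝ} {l : Filter ℝ} [l.NeBot] (hl : l ≤ 𝓝 β)
    {c : ℕ → ℤ} (hc : ∀ i, ∀ᶠ γ in l, puCoeff γ i = c i) {K : Set ℂ} (hK : IsCompact K)
    (hK₁ : K ⊆ {z : ℂ | ‖z‖ < 1}) :
    TendstoUniformlyOn parryUpper (fun z => ∑' i, (c i : ℂ) * z ^ i) l K := by
  have hbound : ∀ᶠ γ in l, ∀ i, ‖(puCoeff γ i : ℂ)‖ ≤ 2 + |β| := by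
    filter_upwards [hl (Metric.ball_mem_nhds β one_pos)] with γ hγ i
    have : |γ| - |β| < 1 := (abs_sub_abs_le_abs_sub γ β).trans_lt hγ
    linarith [norm_puCoeff_le γ i]
  exact tendstoUniformlyOn_tsum_mul_pow hbound (fun i => (hc i).mono fun γ h => by rw [h]) hK hK₁

section SimpleParry

variable {β : ℝ} {N : ℕ}

/-- The quasi-greedy expansion `(t₁ ⋯ t_{N-1} (t_N - 1))^∞` of `1`, after the constant term `-1`;
when `T_β^N(1) = 0` these are the coefficients of `f_β(z) / (1 - z ^ N)`. -/
noncomputable def quasiGreedyCoeff (β : ℝ) (N : ℕ) : ℕ → ℤ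
  | 0 => -1
  | i + 1 => puCoeff β (i % N + 1) - if N ∣ i + 1 then 1 else 0

theorem norm_quasiGreedyCoeff_le (β : ℝ) (N : ℕ) :
    ∀ i, ‖(quasiGreedyCoeff β N i : ℂ)‖ ≤ 2 + |β|
  | 0 => by
    rw [quasiGreedyCoeff, Int.cast_neg, Int.cast_one, norm_neg, norm_one]
    linarith [abs_nonneg β]
  | i + 1 => by
    rw [quasiGreedyCoeff, Int.cast_sub]
    refine (norm_sub_le _ _).trans ?_
    have := norm_puCoeff_le β (i % N + 1)
    split_ifs <;> simp only [Int.cast_one, Int.cast_zero, norm_one, norm_zero] <;> linarith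

theorem quasiGreedyCoeff_eq_puCoeff {i : ℕ} (hi : i < N) :
    quasiGreedyCoeff β N i = puCoeff β i := by
  cases i with
  | zero => rfl
  | succ i =>
    rw [quasiGreedyCoeff, Nat.mod_eq_of_lt (by omega),
      if_neg (Nat.not_dvd_of_pos_of_lt i.succ_pos hi), sub_zero]

theorem quasiGreedyCoeff_add_self (hN : 0 < N) (i : ℕ) :
    quasiGreedyCoeff β N (i + N) = quasiGreedyCoeff β N i + if i = 0 then puCoeff β N else 0 := by
  cases i with
  | zero =>
    obtain ⟨n, rfl⟩ : ∃ n, N = n + 1 := ⟨N - 1, by omega⟩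
    rw [zero_add]
    show puCoeff β (n % (n + 1) + 1) - (if n + 1 ∣ n + 1 then 1 else 0) = -1 + puCoeff β (n + 1)
    rw [Nat.mod_eq_of_lt n.lt_succ_self, if_pos dvd_rfl]
    ring
  | succ i =>
    have hdvd : N ∣ i + N + 1 ↔ N ∣ i + 1 := by
      rw [Nat.add_right_comm]; exact Nat.dvd_add_self_right
    rw [show i + 1 + N = i + N + 1 by omega]
    simp only [quasiGreedyCoeff, Nat.add_mod_right, hdvd, i.succ_ne_zero, if_false, add_zero]

theorem mul_betaT_iterate_mod (hN : 0 < N) (hβN : (betaT β)^[N] 1 = 0) (i : ℕ) :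
    β * (betaT β)^[i % N] 1 = quasiGreedyCoeff β N (i + 1) + (betaT β)^[(i + 1) % N] 1 := by
  have hmod : (i + 1) % N = (i % N + 1) % N := (Nat.mod_add_mod i N 1).symm
  rw [mul_betaT_iterate, quasiGreedyCoeff]
  by_cases hlast : i % N + 1 = N
  · have hdvd : N ∣ i + 1 := Nat.dvd_of_mod_eq_zero (by rw [hmod, hlast, Nat.mod_self])
    rw [if_pos hdvd, hmod, hlast, Nat.mod_self, hβN]
    simp
  · have hlt : i % N + 1 < N := lt_of_le_of_ne (Nat.mod_lt i hN) hlast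
    have hdvd : ¬N ∣ i + 1 := fun h => by
      rw [Nat.mod_eq_zero_of_dvd h, Nat.mod_eq_of_lt hlt] at hmod
      omega
    rw [if_neg hdvd, hmod, Nat.mod_eq_of_lt hlt]
    simp

theorem puCoeff_eq_zero_of_lt (hβN : (betaT β)^[N] 1 = 0) {i : ℕ} (hi : N < i) :
    puCoeff β i = 0 := by
  obtain ⟨m, rfl⟩ := Nat.exists_eq_add_of_lt hi
  have horbit : ∀ m, (betaT β)^[m + N] 1 = 0 := by
    intro m
    induction m with
    | zero => simpa using hβN
    | succ m ih => rw [Nat.add_right_comm, Function.iterate_succ_apply', ih]; simp [betaT]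
  rw [show N + m + 1 = m + N + 1 by omega, puCoeff, horbit, mul_zero, Int.floor_zero]

theorem tsum_quasiGreedyCoeff_mul_pow (hN : 0 < N) (hβN : (betaT β)^[N] 1 = 0) {z : ℂ}
    (hz : ‖z‖ < 1) :
    ∑' i, (quasiGreedyCoeff β N i : ℂ) * z ^ i = parryUpper β z / (1 - z ^ N) := by
  have hS := summable_mul_pow_of_norm_le (norm_quasiGreedyCoeff_le β N) hz
  have hshift : ∑' i, (quasiGreedyCoeff β N (i + N) : ℂ) * z ^ i
      = ∑' i, (quasiGreedyCoeff β N i : ℂ) * z ^ i + puCoeff β N := by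
    have hS' := summable_mul_pow_of_norm_le (fun i => norm_quasiGreedyCoeff_le β N (i + N)) hz
    rw [hS'.tsum_eq_zero_add, hS.tsum_eq_zero_add]
    simp only [quasiGreedyCoeff_add_self hN, ↓reduceIte, Nat.succ_ne_zero, add_zero,
      Int.cast_add, pow_zero, mul_one]
    ring
  have hsplit : ∑' i, (quasiGreedyCoeff β N i : ℂ) * z ^ i
      = ∑ i ∈ Finset.range N, (puCoeff β i : ℂ) * z ^ i
        + z ^ N * (∑' i, (quasiGreedyCoeff β N i : ℂ) * z ^ i + puCoeff β N) := by
    rw [← hshift, ← tsum_mul_left]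
    conv_lhs => rw [← hS.sum_add_tsum_nat_add N]
    congr 1
    · exact Finset.sum_congr rfl fun i hi => by
        rw [quasiGreedyCoeff_eq_puCoeff (Finset.mem_range.1 hi)]
    · exact tsum_congr fun i => by ring
  have hP : parryUpper β z = ∑ i ∈ Finset.range (N + 1), (puCoeff β i : ℂ) * z ^ i :=
    tsum_eq_sum fun i hi => by
      rw [puCoeff_eq_zero_of_lt hβN (by simpa using hi), Int.cast_zero, zero_mul]
  have hzN : (1 : ℂ) - z ^ N ≠ 0 := sub_ne_zero.2 fun h =>
    (pow_lt_one₀ (norm_nonneg z) hz hN.ne').ne (by rw [← norm_pow, ← h, norm_one])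
  rw [eq_div_iff hzN, hP, Finset.sum_range_succ]
  linear_combination hsplit

theorem eventually_puCoeff_eq_quasiGreedyCoeff (hβ : 0 < β) (hN : 0 < N)
    (hβN : (betaT β)^[N] 1 = 0) (hmin : ∀ m, 1 ≤ m → m < N → (betaT β)^[m] 1 ≠ 0) :
    ∀ i, ∀ᶠ γ in 𝓝[<] β, puCoeff γ i = quasiGreedyCoeff β N i := by
  refine eventually_puCoeff_eq_nhdsLT (y := fun i => (betaT β)^[i % N] 1) hβ rfl (by simp)
    (mul_betaT_iterate_mod hN hβN) (fun i => ?_) (fun i => betaT_iterate_le_one β _)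
  rcases Nat.eq_zero_or_pos (i % N) with h | h
  · simp [h]
  · exact (betaT_iterate_nonneg_s11 β _).lt_of_ne' (hmin _ h (Nat.mod_lt i hN))

end SimpleParry

theorem parry_upper_right_left_continuity_general
    (β : ℝ) (hβ1 : 1 < β) :
    ((¬ ∃ N : ℕ, 1 ≤ N ∧ (betaT β)^[N] 1 = 0) →
      ∀ γ : ℕ → ℝ, (∀ k, 1 < γ k ∧ γ k < (1 + Real.sqrt 5) / 2) →
        Filter.Tendsto γ Filter.atTop (nhds β) →
        ∀ K : Set ℂ, K ⊆ {z : ℂ | ‖z‖ < 1} → IsCompact K →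
          TendstoUniformlyOn (fun k z => parryUpper (γ k) z) (parryUpper β)
            Filter.atTop K) ∧
    (∀ N : ℕ, 1 ≤ N → (betaT β)^[N] 1 = 0 →
      (∀ m : ℕ, 1 ≤ m → m < N → (betaT β)^[m] 1 ≠ 0) →
      ((∀ γ : ℕ → ℝ, (∀ k, β < γ k ∧ γ k < (1 + Real.sqrt 5) / 2) →
        Filter.Tendsto γ Filter.atTop (nhds β) →
        ∀ K : Set ℂ, K ⊆ {z : ℂ | ‖z‖ < 1} → IsCompact K →
          TendstoUniformlyOn (fun k z => parryUpper (γ k) z) (parryUpper β)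
            Filter.atTop K) ∧
       (∀ γ : ℕ → ℝ, (∀ k, 1 < γ k ∧ γ k < β) →
        Filter.Tendsto γ Filter.atTop (nhds β) →
        ∀ K : Set ℂ, K ⊆ {z : ℂ | ‖z‖ < 1} → IsCompact K →
          TendstoUniformlyOn (fun k z => parryUpper (γ k) z)
            (fun z => parryUpper β z / (1 - z ^ N)) Filter.atTop K))) := by
  have hβ : 0 < β := zero_lt_one.trans hβ1
  refine ⟨fun hns γ _ hγ K hK₁ hK => ?_, fun N hN hβN hmin => ⟨fun γ hγβ hγ K hK₁ hK => ?_,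
    fun γ hγβ hγ K hK₁ hK => ?_⟩⟩
  · have hβ' : ∀ i, (betaT β)^[i + 1] 1 ≠ 0 := fun i h => hns ⟨i + 1, i.succ_pos, h⟩
    exact (tendstoUniformlyOn_parryUpper le_rfl (eventually_puCoeff_eq_nhds hβ hβ') hK
      hK₁).comp_tendsto hγ
  · have hγ' : Tendsto γ atTop (𝓝[≥] β) :=
      tendsto_nhdsWithin_iff.2 ⟨hγ, .of_forall fun k => (hγβ k).1.le⟩
    exact (tendstoUniformlyOn_parryUpper nhdsWithin_le_nhds
      (eventually_puCoeff_eq_nhdsGE hβ.le) hK hK₁).comp_tendsto hγ'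
  · have hγ' : Tendsto γ atTop (𝓝[<] β) :=
      tendsto_nhdsWithin_iff.2 ⟨hγ, .of_forall fun k => (hγβ k).2⟩
    exact ((tendstoUniformlyOn_parryUpper nhdsWithin_le_nhds
      (eventually_puCoeff_eq_quasiGreedyCoeff hβ hN hβN hmin) hK hK₁).comp_tendsto hγ').congr_right
      fun z hz => tsum_quasiGreedyCoeff_mul_pow hN hβN (hK₁ hz)

/-- let `β ∈ (1, (1+√5)/2)`.
(i) If `β` is not a simple Parry number, then for every sequence
`γ_k ∈ (1, (1+√5)/2)` with `γ_k → β`, the functions `f_{γ_k}` converge to `f_β`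
uniformly on every compact subset of the open unit disk.
(ii) If `β` is a simple Parry number and `N` is the smallest positive integer with
`T_β^N(1) = 0`, then `f_γ → f_β` uniformly on compacts of `|z| < 1` as `γ → β⁺`,
while `f_γ(z) → f_β(z)/(1 − z^N)` uniformly on compacts of `|z| < 1` as `γ → β⁻`. -/
theorem parry_upper_right_left_continuity
    (β : ℝ) (hβ1 : 1 < β) (hβ2 : β < (1 + Real.sqrt 5) / 2) :
    ((¬ ∃ N : ℕ, 1 ≤ N ∧ (betaT β)^[N] 1 = 0) →
      ∀ γ : ℕ → ℝ, (∀ k, 1 < γ k ∧ γ k < (1 + Real.sqrt 5) / 2) →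
        Filter.Tendsto γ Filter.atTop (nhds β) →
        ∀ K : Set ℂ, K ⊆ {z : ℂ | ‖z‖ < 1} → IsCompact K →
          TendstoUniformlyOn (fun k z => parryUpper (γ k) z) (parryUpper β)
            Filter.atTop K) ∧
    (∀ N : ℕ, 1 ≤ N → (betaT β)^[N] 1 = 0 →
      (∀ m : ℕ, 1 ≤ m → m < N → (betaT β)^[m] 1 ≠ 0) →
      ((∀ γ : ℕ → ℝ, (∀ k, β < γ k ∧ γ k < (1 + Real.sqrt 5) / 2) →
        Filter.Tendsto γ Filter.atTop (nhds β) →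
        ∀ K : Set ℂ, K ⊆ {z : ℂ | ‖z‖ < 1} → IsCompact K →
          TendstoUniformlyOn (fun k z => parryUpper (γ k) z) (parryUpper β)
            Filter.atTop K) ∧
       (∀ γ : ℕ → ℝ, (∀ k, 1 < γ k ∧ γ k < β) →
        Filter.Tendsto γ Filter.atTop (nhds β) →
        ∀ K : Set ℂ, K ⊆ {z : ℂ | ‖z‖ < 1} → IsCompact K →
          TendstoUniformlyOn (fun k z => parryUpper (γ k) z)
            (fun z => parryUpper β z / (1 - z ^ N)) Filter.atTop K))) :=
  parry_upper_right_left_continuity_general β hβ1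
end

section
/- Let β with 1 < β < (1+√5)/2 be a reciprocal algebraic integer with monic minimal polynomial P_β (which, being reciprocal, has constant coefficient 1), and let n = dyg(β). Then there exists a formal power series U(X) = −1 + Σ_{j≥1} b_j X^j with all coefficients b_j ∈ ℤ such that P_β(X) = U(X)·f_β(X) in ℤ[[X]], and the radius of convergence of U(z) is at least θ_{n−1}; in particular U defines a holomorphic function on the open disk |z| < θ_{n−1}. -/
open Finset PowerSeries

section Orbit

variable {β : ℝ}

lemma betaT_iterate_mem_Icc (β : ℝ) (i : ℕ) : (betaT β)^[i] 1 ∈ Set.Icc (0 : ℝ) 1 := by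
  induction i with
  | zero => simp
  | succ i _ =>
    rw [Function.iterate_succ_apply']
    exact ⟨Int.fract_nonneg _, (Int.fract_lt_one _).le⟩

lemma betaT_iterate_succ (β : ℝ) (i : ℕ) :
    (betaT β)^[i + 1] 1 = β * (betaT β)^[i] 1 - puCoeff β (i + 1) := by
  rw [Function.iterate_succ_apply', betaT, puCoeff, Int.self_sub_floor]

lemma puCoeff_succ_nonneg (hβ : 0 ≤ β) (i : ℕ) : 0 ≤ puCoeff β (i + 1) :=
  Int.floor_nonneg.mpr (mul_nonneg hβ (betaT_iterate_mem_Icc β i).1)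

lemma puCoeff_succ_le_one (hβ : 0 ≤ β) (hβ2 : β < 2) (i : ℕ) : puCoeff β (i + 1) ≤ 1 := by
  have hx := (betaT_iterate_mem_Icc β i).2
  have : β * (betaT β)^[i] 1 < 2 := by nlinarith
  have : ⌊β * (betaT β)^[i] 1⌋ < 2 := Int.floor_lt.mpr (by exact_mod_cast this)
  exact Int.lt_add_one_iff.mp this

lemma puCoeff_succ_eq_zero (hβ : 0 ≤ β) {i : ℕ} (h : β * (betaT β)^[i] 1 < 1) :
    puCoeff β (i + 1) = 0 :=
  Int.floor_eq_zero_iff.mpr ⟨mul_nonneg hβ (betaT_iterate_mem_Icc β i).1, h⟩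

lemma puCoeff_eq_zero_of_ne_zero {m : ℕ} (hβ : 0 ≤ β) (hsmall : ∀ j < m, β ^ j * (β - 1) < 1)
    {i : ℕ} (hi : puCoeff β (i + 1) ≠ 0) {j : ℕ} (hj0 : 0 < j) (hjm : j < m) :
    puCoeff β (i + 1 + j) = 0 := by
  have hstep : ∀ k, k + 1 < m → (betaT β)^[i + 1 + k] 1 ≤ β ^ k * (β - 1) →
      β * (betaT β)^[i + 1 + k] 1 < 1 := fun k hk hx =>
    calc β * (betaT β)^[i + 1 + k] 1 ≤ β * (β ^ k * (β - 1)) := by gcongr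
      _ = β ^ (k + 1) * (β - 1) := by ring
      _ < 1 := hsmall (k + 1) hk
  have horbit : ∀ k, k < m → (betaT β)^[i + 1 + k] 1 ≤ β ^ k * (β - 1) := by
    intro k
    induction k with
    | zero =>
      intro _
      have h1 : (1 : ℝ) ≤ puCoeff β (i + 1) := by
        exact_mod_cast (puCoeff_succ_nonneg hβ i).lt_of_ne' hi
      have hx := (betaT_iterate_mem_Icc β i).2
      rw [add_zero, betaT_iterate_succ]
      nlinarith
    | succ k ih =>
      intro hk
      have hlt := hstep k hk (ih (by omega))
      rw [← add_assoc, betaT_iterate_succ, puCoeff_succ_eq_zero hβ hlt, Int.cast_zero, sub_zero,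
        pow_succ', mul_assoc]
      exact mul_le_mul_of_nonneg_left (ih (by omega)) hβ
  obtain ⟨k, rfl⟩ : ∃ k, j = k + 1 := ⟨j - 1, by omega⟩
  rw [← add_assoc]
  exact puCoeff_succ_eq_zero hβ (hstep k hjm (horbit k (by omega)))

end Orbit

section Trinomial

variable {θ : ℝ} {m : ℕ}

lemma pow_mul_sub_one_lt_one {β : ℝ} (hβ : 1 ≤ β) (hθ0 : 0 < θ) (hθ : -1 + θ + θ ^ m = 0)
    (hβθ : β < θ⁻¹) {j : ℕ} (hj : j < m) : β ^ j * (β - 1) < 1 := by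
  have hθm : θ ^ m = θ * θ ^ (m - 1) := by rw [← pow_succ']; congr 1; omega
  have hinv : θ⁻¹ - 1 = θ ^ (m - 1) := by
    field_simp
    linarith
  calc β ^ j * (β - 1) ≤ β ^ (m - 1) * (β - 1) :=
        mul_le_mul_of_nonneg_right (pow_le_pow_right₀ hβ (by omega)) (by linarith)
    _ ≤ θ⁻¹ ^ (m - 1) * (β - 1) := by gcongr
    _ < θ⁻¹ ^ (m - 1) * θ ^ (m - 1) := by gcongr; linarith
    _ = 1 := by rw [inv_pow, inv_mul_cancel₀ (by positivity)]

lemma add_pow_lt_one {r : ℝ} (hm : m ≠ 0) (hr : 0 ≤ r) (hrθ : r < θ)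
    (hθ : -1 + θ + θ ^ m = 0) : r + r ^ m < 1 := by
  have : r ^ m < θ ^ m := pow_lt_pow_left₀ hrθ hr hm
  linarith

end Trinomial

lemma sum_abs_mul_pow_le_of_gaps {m : ℕ} {r : ℝ} (hm : 0 < m) (hr : 0 ≤ r) (hrm : r ^ m < 1)
    (N : ℕ) : ∀ {s : ℕ → ℝ}, (∀ k, |s k| ≤ 1) →
      (∀ k, s k ≠ 0 → ∀ j, 0 < j → j < m → s (k + j) = 0) →
      ∑ k ∈ range N, |s k| * r ^ k ≤ (1 - r ^ m)⁻¹ := by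
  have hr1 : r ≤ 1 := ((pow_lt_one_iff_of_nonneg hr hm.ne').mp hrm).le
  have hpos : 0 < 1 - r ^ m := by linarith
  have hinv : 1 ≤ (1 - r ^ m)⁻¹ := (one_le_inv₀ hpos).mpr (by linarith [pow_nonneg hr m])
  induction N with
  | zero => intro s _ _; simp only [range_zero, sum_empty]; linarith
  | succ N ih =>
    intro s hs hgap
    have ih_shift : ∀ a, ∑ k ∈ range N, |s (a + k)| * r ^ k ≤ (1 - r ^ m)⁻¹ := fun a =>
      ih (fun k => hs _) fun k hk j hj hjm => by
        rw [← add_assoc]; exact hgap (a + k) hk j hj hjm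
    by_cases h0 : s 0 = 0
    · calc ∑ k ∈ range (N + 1), |s k| * r ^ k
          = r * ∑ k ∈ range N, |s (1 + k)| * r ^ k := by
            simp only [sum_range_succ', h0, abs_zero, zero_mul, add_zero, mul_sum, pow_succ]
            refine sum_congr rfl fun k _ => ?_
            rw [add_comm 1 k]; ring
        _ ≤ 1 * (1 - r ^ m)⁻¹ := by gcongr; exact ih_shift 1
        _ = (1 - r ^ m)⁻¹ := one_mul _
    · have hfirst : ∑ k ∈ range m, |s k| * r ^ k = |s 0| := by
        rw [sum_eq_single 0 (fun j hj hj0 => by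
          rw [← zero_add j, hgap 0 h0 j (Nat.pos_of_ne_zero hj0) (mem_range.mp hj)]; simp)
          (by simp [hm])]
        simp
      calc ∑ k ∈ range (N + 1), |s k| * r ^ k ≤ ∑ k ∈ range (m + N), |s k| * r ^ k :=
            sum_le_sum_of_subset_of_nonneg (range_subset_range.mpr (by omega))
              fun _ _ _ => by positivity
        _ = |s 0| + r ^ m * ∑ k ∈ range N, |s (m + k)| * r ^ k := by
            rw [sum_range_add, hfirst, mul_sum]
            congr 1
            exact sum_congr rfl fun k _ => by ring
        _ ≤ 1 + r ^ m * (1 - r ^ m)⁻¹ := by gcongr; exacts [hs 0, ih_shift m]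
        _ = (1 - r ^ m)⁻¹ := by field_simp; ring

lemma sum_abs_puCoeff_mul_pow_le {β θ r : ℝ} {m : ℕ} (hm : 0 < m) (hβ : 1 ≤ β) (hθ0 : 0 < θ)
    (hθ : -1 + θ + θ ^ m = 0) (hβθ : β < θ⁻¹) (hr : 0 ≤ r) (hrθ : r < θ) (N : ℕ) :
    ∑ k ∈ range N, |(puCoeff β (k + 1) : ℝ)| * r ^ (k + 1) ≤ r * (1 - r ^ m)⁻¹ := by
  have hsmall : ∀ j < m, β ^ j * (β - 1) < 1 := fun j hj => pow_mul_sub_one_lt_one hβ hθ0 hθ hβθ hj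
  have hβ0 : (0 : ℝ) ≤ β := by linarith
  have hβ2 : β < 2 := by linarith [hsmall 0 hm]
  have hdigit : ∀ k, |(puCoeff β (k + 1) : ℝ)| ≤ 1 := fun k => by
    have := puCoeff_succ_nonneg hβ0 k
    have := puCoeff_succ_le_one hβ0 hβ2 k
    rw [abs_le]
    norm_cast
    omega
  have hgap : ∀ k, (puCoeff β (k + 1) : ℝ) ≠ 0 → ∀ j, 0 < j → j < m →
      (puCoeff β (k + j + 1) : ℝ) = 0 := fun k hk j hj hjm => by
    rw [add_right_comm, puCoeff_eq_zero_of_ne_zero hβ0 hsmall (by exact_mod_cast hk) hj hjm,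
      Int.cast_zero]
  have hrm : r ^ m < 1 := by linarith [add_pow_lt_one hm.ne' hr hrθ hθ]
  calc ∑ k ∈ range N, |(puCoeff β (k + 1) : ℝ)| * r ^ (k + 1)
      = r * ∑ k ∈ range N, |(puCoeff β (k + 1) : ℝ)| * r ^ k := by
        rw [mul_sum]; exact sum_congr rfl fun k _ => by ring
    _ ≤ r * (1 - r ^ m)⁻¹ := by
        gcongr
        exact sum_abs_mul_pow_le_of_gaps hm hr hrm N hdigit hgap

/-- Comparing coefficients in `U * F` gives `|u_i| r^i ≤ (1 - q) C + q C = C` by strong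
induction, where `C = D / (1 - q)`. -/
lemma abs_coeff_mul_pow_le {U F : PowerSeries ℝ} {r q D : ℝ} (hr : 0 ≤ r) (hq : q < 1)
    (hF0 : |constantCoeff F| = 1)
    (hF : ∀ N, ∑ k ∈ range N, |coeff (k + 1) F| * r ^ (k + 1) ≤ q)
    (hUF : ∀ i, |coeff i (U * F)| * r ^ i ≤ D) (i : ℕ) :
    |coeff i U| * r ^ i ≤ D / (1 - q) := by
  set C := D / (1 - q)
  have hC : 0 ≤ C :=
    div_nonneg ((by positivity : (0 : ℝ) ≤ |coeff 0 (U * F)| * r ^ 0).trans (hUF 0)) (by linarith)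
  have hUF' : ∀ i, |coeff i (U * F)| * r ^ i ≤ (1 - q) * C := fun i => by
    rw [mul_div_cancel₀ _ (by linarith)]; exact hUF i
  induction i using Nat.strong_induction_on with
  | _ i ih =>
  have hrec : coeff i U * constantCoeff F
      = coeff i (U * F) - ∑ j ∈ range i, coeff j U * coeff (i - j) F := by
    rw [coeff_mul, Nat.sum_antidiagonal_eq_sum_range_succ_mk, sum_range_succ, Nat.sub_self,
      coeff_zero_eq_constantCoeff_apply]
    ring
  have hterm : ∀ j ∈ range i, |coeff j U * coeff (i - j) F| * r ^ i
      ≤ C * (|coeff (i - j) F| * r ^ (i - j)) := fun j hj => by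
    have hji : j < i := mem_range.mp hj
    rw [abs_mul, ← pow_mul_pow_sub r hji.le]
    calc |coeff j U| * |coeff (i - j) F| * (r ^ j * r ^ (i - j))
        = (|coeff j U| * r ^ j) * (|coeff (i - j) F| * r ^ (i - j)) := by ring
      _ ≤ C * (|coeff (i - j) F| * r ^ (i - j)) := by gcongr; exact ih j hji
  have hreflect : ∑ j ∈ range i, |coeff (i - j) F| * r ^ (i - j)
      = ∑ k ∈ range i, |coeff (k + 1) F| * r ^ (k + 1) := by
    rw [← sum_range_reflect]
    exact sum_congr rfl fun j hj => by
      rw [show i - (i - 1 - j) = j + 1 by have := mem_range.mp hj; omega]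
  calc |coeff i U| * r ^ i = |coeff i U * constantCoeff F| * r ^ i := by rw [abs_mul, hF0, mul_one]
    _ ≤ (|coeff i (U * F)| + ∑ j ∈ range i, |coeff j U * coeff (i - j) F|) * r ^ i := by
        rw [hrec]; gcongr; exact (abs_sub _ _).trans (add_le_add_right (abs_sum_le_sum_abs _ _) _)
    _ ≤ (1 - q) * C + C * ∑ j ∈ range i, |coeff (i - j) F| * r ^ (i - j) := by
        rw [add_mul, sum_mul, mul_sum]; exact add_le_add (hUF' i) (sum_le_sum hterm)
    _ ≤ (1 - q) * C + C * q := by rw [hreflect]; gcongr; exact hF i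
    _ = C := by ring

lemma summable_norm_mul_pow_of_bound {𝕜 : Type*} [NormedDivisionRing 𝕜] {a : ℕ → 𝕜} {r C : ℝ}
    (ha : ∀ i, ‖a i‖ * r ^ i ≤ C) {z : 𝕜} (hz : ‖z‖ < r) :
    Summable fun j => ‖a j * z ^ j‖ := by
  have hr : 0 < r := (norm_nonneg z).trans_lt hz
  refine Summable.of_nonneg_of_le (fun j => norm_nonneg _) (fun j => ?_)
    ((summable_geometric_of_lt_one (by positivity) ((div_lt_one hr).mpr hz)).mul_left C)
  calc ‖a j * z ^ j‖ = ‖a j‖ * r ^ j * (‖z‖ / r) ^ j := by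
        rw [norm_mul, norm_pow, div_pow, mul_assoc, mul_div_cancel₀ _ (by positivity)]
    _ ≤ C * (‖z‖ / r) ^ j := by gcongr; exact ha j

lemma Polynomial.exists_abs_coeff_mul_pow_le (p : Polynomial ℝ) {r : ℝ} (hr : 0 ≤ r) :
    ∃ D, ∀ i, |p.coeff i| * r ^ i ≤ D := by
  refine ⟨∑ i ∈ p.support, |p.coeff i| * r ^ i, fun i => ?_⟩
  by_cases hi : i ∈ p.support
  · exact single_le_sum (f := fun i => |p.coeff i| * r ^ i) (fun j _ => by positivity) hi
  · rw [Polynomial.notMem_support_iff.mp hi, abs_zero, zero_mul]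
    exact sum_nonneg fun j _ => by positivity

lemma coeff_zero_minpoly_of_reverse_eq {β : ℝ} (hint : IsIntegral ℤ β)
    (hrec : (minpoly ℚ β).reverse = minpoly ℚ β) : (minpoly ℤ β).coeff 0 = 1 := by
  have hQ : (minpoly ℚ β).coeff 0 = 1 := by
    rw [← hrec, Polynomial.coeff_zero_reverse, (minpoly.monic hint.tower_top).leadingCoeff]
  have hmap : minpoly ℚ β = (minpoly ℤ β).map (algebraMap ℤ ℚ) :=
    minpoly.isIntegrallyClosed_eq_field_fractions ℚ ℝ hint
  rw [hmap, Polynomial.coeff_map] at hQ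
  simpa using hQ

theorem minimal_polynomial_fracturability_general
    (θ : ℕ → ℝ)
    (hθ : ∀ n : ℕ, 2 ≤ n → θ n ∈ Set.Ioo (0 : ℝ) 1 ∧ -1 + θ n + θ n ^ n = 0)
    (β : ℝ) (hβ1 : 1 < β)
    (hint : IsIntegral ℤ β)
    (hrec : (minpoly ℚ β).reverse = minpoly ℚ β)
    (n : ℕ) (hn : 3 ≤ n)
    (hd2 : β < (θ (n - 1))⁻¹) :
    ∃ b : ℕ → ℤ, b 0 = -1 ∧
      PowerSeries.mk (fun i => (minpoly ℤ β).coeff i)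
        = PowerSeries.mk b * PowerSeries.mk (fun i => puCoeff β i) ∧
      ∀ z : ℂ, ‖z‖ < θ (n - 1) →
        Summable (fun j : ℕ => ‖(b j : ℂ) * z ^ j‖) := by
  obtain ⟨⟨hθ0, -⟩, hθ⟩ := hθ (n - 1) (by omega)
  set P := PowerSeries.mk fun i => (minpoly ℤ β).coeff i
  set F := PowerSeries.mk fun i => puCoeff β i
  have hF0 : constantCoeff F = ((-1 : ℤˣ) : ℤ) := rfl
  set U := P * F.invOfUnit (-1)
  have hPUF : P = U * F := by rw [mul_assoc, mul_comm _ F, mul_invOfUnit F _ hF0, mul_one]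
  refine ⟨fun j => coeff j U, ?_, by rw [hPUF, PowerSeries.ext fun j => coeff_mk j _], ?_⟩
  · have h0 := congrArg constantCoeff hPUF
    rw [map_mul, hF0, constantCoeff_mk, coeff_zero_minpoly_of_reverse_eq hint hrec] at h0
    change coeff 0 U = -1
    simp only [coeff_zero_eq_constantCoeff_apply, Units.val_neg, Units.val_one] at h0 ⊢
    linarith
  intro z hz
  obtain ⟨r, hzr, hrθ⟩ := exists_between hz
  have hr : 0 ≤ r := (norm_nonneg z).trans hzr.le
  have hq : r * (1 - r ^ (n - 1))⁻¹ < 1 := by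
    have := add_pow_lt_one (by omega) hr hrθ hθ
    exact (mul_inv_lt_iff₀ (by linarith)).mpr (by linarith)
  obtain ⟨D, hD⟩ := ((minpoly ℤ β).map (Int.castRingHom ℝ)).exists_abs_coeff_mul_pow_le hr
  have hU := abs_coeff_mul_pow_le (U := map (Int.castRingHom ℝ) U) (F := map (Int.castRingHom ℝ) F)
    hr hq (by rw [← coeff_zero_eq_constantCoeff_apply, coeff_map]; simp [F, puCoeff])
    (fun N => by
      simpa [F, coeff_map] using sum_abs_puCoeff_mul_pow_le (by omega) hβ1.le hθ0 hθ hd2 hr hrθ N)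
    (fun i => by rw [← map_mul, ← hPUF]; simpa [P, coeff_map] using hD i)
  change Summable fun j => ‖((coeff j U : ℤ) : ℂ) * z ^ j‖
  exact summable_norm_mul_pow_of_bound
    (fun i => by simpa [Complex.norm_intCast, coeff_map] using hU i) hzr

/-- let `β ∈ (1, (1+√5)/2)` be a reciprocal algebraic integer with monic
minimal polynomial `P_β` and `n = dyg β` (i.e. `θ_n⁻¹ ≤ β < θ_{n−1}⁻¹`). Then there is
a formal power series `U(X) = −1 + Σ_{j≥1} b_j X^j` with integer coefficients such that
`P_β(X) = U(X)·f_β(X)` in `ℤ[[X]]`, and the radius of convergence of `U` is at least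
`θ_{n−1}`: `U` defines a holomorphic function on the open disk `|z| < θ_{n−1}`. -/
theorem minimal_polynomial_fracturability
    (θ : ℕ → ℝ)
    (hθ : ∀ n : ℕ, 2 ≤ n → θ n ∈ Set.Ioo (0 : ℝ) 1 ∧ -1 + θ n + θ n ^ n = 0)
    (β : ℝ) (hβ1 : 1 < β) (hβ2 : β < (1 + Real.sqrt 5) / 2)
    (hint : IsIntegral ℤ β)
    (hrec : (minpoly ℚ β).reverse = minpoly ℚ β)
    (n : ℕ) (hn : 3 ≤ n)
    (hd1 : (θ n)⁻¹ ≤ β) (hd2 : β < (θ (n - 1))⁻¹) :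
    ∃ b : ℕ → ℤ, b 0 = -1 ∧
      PowerSeries.mk (fun i => (minpoly ℤ β).coeff i)
        = PowerSeries.mk b * PowerSeries.mk (fun i => puCoeff β i) ∧
      ∀ z : ℂ, ‖z‖ < θ (n - 1) →
        Summable (fun j : ℕ => ‖(b j : ℂ) * z ^ j‖) :=
  minimal_polynomial_fracturability_general θ hθ β hβ1 hint hrec n hn hd2
end
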